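/- Suppose F = {X ∈ S^n_+ : A(X) = b} is nonempty and bounded. Then for every α > 0 there exists a unique X(α) ∈ F(α) ∩ S^n_{++} maximizing log det(X) over F(α) := {X ∈ S^n_+ : A(X) = b + α A(I)}, where I is the identity. -/

import Mathlib

/-!
Boundedness of `F` forces the recession cone `{Z ⪰ 0 : A(Z) = 0}` to be trivial, so
`‖A(Z)‖` is bounded below by a multiple of `tr Z` on the positive semidefinite cone; hence every
`F(α)` is compact. For `α > 0` it contains the positive definite matrix `X₀ + αI` (with
`X₀ ∈ F`), so `det` attains a positive maximum on `F(α)`, necessarily at a positive definite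
matrix. Uniqueness is strict log-concavity of `det`: writing `X = CᴴC` and `Y = CᴴBC`,
`det((X + Y)/2)² > det X det Y` reduces to `(1 + λ)² > 4λ` for the eigenvalues `λ ≠ 1` of `B`.
-/

open Matrix

def spectrahedron {n E : Type*} [Fintype n] [AddCommGroup E] [Module ℝ E]
    (A : Matrix n n ℝ →ₗ[ℝ] E) (c : E) : Set (Matrix n n ℝ) :=
  {X | X.PosSemidef ∧ A X = c}

section
variable {n E : Type*} [Fintype n]

theorem Matrix.PosSemidef.diag_le_trace {X : Matrix n n ℝ} (hX : X.PosSemidef) (i : n) :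
    X i i ≤ X.trace :=
  Finset.single_le_sum (f := fun k => X k k) (fun _ _ => hX.diag_nonneg) (Finset.mem_univ i)

theorem Matrix.PosSemidef.abs_apply_le_trace {X : Matrix n n ℝ} (hX : X.PosSemidef) (i j : n) :
    |X i j| ≤ X.trace := by
  have hminor := (hX.submatrix ![i, j]).det_nonneg
  have hsymm : X j i = X i j := hX.isHermitian.apply i j
  simp only [det_fin_two, submatrix_apply, Matrix.cons_val_zero, Matrix.cons_val_one, hsymm]
    at hminor
  refine abs_le_of_sq_le_sq' ?_ hX.trace_nonneg |> abs_le.mpr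
  nlinarith [hX.diag_le_trace i, hX.diag_le_trace j, hX.diag_nonneg (i := i),
    hX.diag_nonneg (i := j)]

theorem isClosed_setOf_posSemidef : IsClosed {X : Matrix n n ℝ | X.PosSemidef} := by
  simp only [posSemidef_iff_dotProduct_mulVec, Set.ofPred_and, Set.ofPred_forall]
  exact (isClosed_eq continuous_id.matrix_conjTranspose continuous_id).inter <|
    isClosed_iInter fun x => isClosed_le continuous_const <|
      continuous_const.dotProduct (continuous_id.matrix_mulVec continuous_const)

theorem isCompact_setOf_posSemidef_trace_le (c : ℝ) :
    IsCompact {X : Matrix n n ℝ | X.PosSemidef ∧ X.trace ≤ c} := by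
  have hbox := isCompact_univ_pi fun (_ : n) => isCompact_univ_pi fun (_ : n) =>
    isCompact_Icc (a := -c) (b := c)
  refine hbox.of_isClosed_subset
    (isClosed_setOf_posSemidef.inter (isClosed_le continuous_id.matrix_trace continuous_const))
    fun X hX i _ j _ => abs_le.mp ((hX.1.abs_apply_le_trace i j).trans hX.2)

section
variable [AddCommGroup E] [Module ℝ E] {A : Matrix n n ℝ →ₗ[ℝ] E}

theorem convex_spectrahedron (c : E) : Convex ℝ (spectrahedron A c) := by
  intro X hX Y hY a b ha hb hab
  refine ⟨(hX.1.smul ha).add (hY.1.smul hb), ?_⟩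
  rw [map_add, map_smul, map_smul, hX.2, hY.2, ← add_smul, hab, one_smul]

theorem eq_zero_of_posSemidef_of_map_eq_zero {c : E} {X₀ : Matrix n n ℝ}
    (hX₀ : X₀ ∈ spectrahedron A c) {M : ℝ} (hM : ∀ X ∈ spectrahedron A c, X.trace ≤ M)
    {Z : Matrix n n ℝ} (hZ : Z.PosSemidef) (hAZ : A Z = 0) : Z = 0 := by
  refine hZ.trace_eq_zero_iff.mp (le_antisymm ?_ hZ.trace_nonneg)
  by_contra! hpos
  set t := (M - X₀.trace + 1) / Z.trace
  have ht : 0 ≤ t := div_nonneg (by linarith [hM X₀ hX₀]) hpos.le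
  have hmem : X₀ + t • Z ∈ spectrahedron A c :=
    ⟨hX₀.1.add (hZ.smul ht), by rw [map_add, map_smul, hAZ, smul_zero, add_zero, hX₀.2]⟩
  have := hM _ hmem
  rw [trace_add, trace_smul, smul_eq_mul, div_mul_cancel₀ _ hpos.ne'] at this
  linarith

end

section
variable [NormedAddCommGroup E] [NormedSpace ℝ E] {A : Matrix n n ℝ →ₗ[ℝ] E}

theorem isClosed_spectrahedron (c : E) : IsClosed (spectrahedron A c) :=
  isClosed_setOf_posSemidef.inter (isClosed_eq A.continuous_of_finiteDimensional continuous_const)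

theorem exists_trace_le_mul_norm_of_posSemidef
    (hA : ∀ Z : Matrix n n ℝ, Z.PosSemidef → A Z = 0 → Z = 0) :
    ∃ C : ℝ, ∀ X : Matrix n n ℝ, X.PosSemidef → X.trace ≤ C * ‖A X‖ := by
  set K := {Z : Matrix n n ℝ | Z.PosSemidef ∧ Z.trace = 1}
  have hK : IsCompact K := (isCompact_setOf_posSemidef_trace_le 1).of_isClosed_subset
    (isClosed_setOf_posSemidef.inter (isClosed_eq continuous_id.matrix_trace continuous_const))
    fun Z hZ => ⟨hZ.1, hZ.2.le⟩
  have hAK : ∀ Z ∈ K, 0 < ‖A Z‖ := fun Z hZ => norm_pos_iff.mpr fun h0 => by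
    simpa [hA Z hZ.1 h0] using hZ.2
  obtain ⟨ε, hε, hεK⟩ :=
    hK.exists_forall_le' A.continuous_of_finiteDimensional.norm.continuousOn hAK
  refine ⟨ε⁻¹, fun X hX => ?_⟩
  rcases hX.trace_nonneg.eq_or_lt with h0 | hpos
  · rw [← h0]
    positivity
  have hXK : (X.trace)⁻¹ • X ∈ K := ⟨hX.smul (inv_nonneg.mpr hpos.le), by
    rw [trace_smul, smul_eq_mul, inv_mul_cancel₀ hpos.ne']⟩
  have hεX := hεK _ hXK
  rw [map_smul, norm_smul, Real.norm_of_nonneg (inv_nonneg.mpr hpos.le),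
    le_inv_mul_iff₀ hpos] at hεX
  rw [le_inv_mul_iff₀ hε]
  linarith

theorem isCompact_spectrahedron (hA : ∀ Z : Matrix n n ℝ, Z.PosSemidef → A Z = 0 → Z = 0)
    (c : E) :
    IsCompact (spectrahedron A c) := by
  obtain ⟨C, hC⟩ := exists_trace_le_mul_norm_of_posSemidef hA
  exact (isCompact_setOf_posSemidef_trace_le (C * ‖c‖)).of_isClosed_subset
    (isClosed_spectrahedron c) fun X hX => ⟨hX.1, hX.2 ▸ hC X hX.1⟩

end

section
variable [DecidableEq n]

theorem Matrix.det_conjStarAlgAut (U : unitaryGroup n ℝ) (M : Matrix n n ℝ) :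
    (Unitary.conjStarAlgAut ℝ _ U M).det = M.det := by
  rw [Unitary.conjStarAlgAut_apply, det_mul, det_mul, mul_right_comm, ← det_mul,
    Unitary.mul_star_self_of_mem U.2, det_one, one_mul]

theorem Matrix.PosDef.pow_card_mul_det_lt_sq_det_one_add {B : Matrix n n ℝ} (hB : B.PosDef)
    (hB1 : B ≠ 1) : 4 ^ Fintype.card n * B.det < (1 + B).det ^ 2 := by
  set ev := hB.isHermitian.eigenvalues
  have hspec := hB.isHermitian.spectral_theorem
  simp only [RCLike.ofReal_real_eq_id, Function.id_comp] at hspec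
  have hdet : B.det = ∏ i, ev i := by
    simpa using hB.isHermitian.det_eq_prod_eigenvalues
  have hdet_one_add : (1 + B).det = ∏ i, (1 + ev i) := by
    rw [hspec, ← map_one (Unitary.conjStarAlgAut ℝ _ _), ← map_add, det_conjStarAlgAut,
      ← diagonal_one, diagonal_add, det_diagonal]
  obtain ⟨k, hk⟩ : ∃ k, ev k ≠ 1 := by
    by_contra! h
    refine hB1 ?_
    rw [hspec]
    convert map_one (Unitary.conjStarAlgAut ℝ (Matrix n n ℝ) _)
    rw [← diagonal_one]
    exact congrArg diagonal (funext h)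
  rw [hdet, hdet_one_add, ← Finset.prod_pow, ← Finset.card_univ, ← Finset.prod_const,
    ← Finset.prod_mul_distrib]
  refine Finset.prod_lt_prod (fun i _ => mul_pos (by norm_num) (hB.eigenvalues_pos i))
    (fun i _ => by nlinarith [sq_nonneg (ev i - 1)]) ⟨k, Finset.mem_univ k, ?_⟩
  nlinarith [sq_pos_of_ne_zero (sub_ne_zero.mpr hk)]

open scoped MatrixOrder in
theorem Matrix.PosDef.exists_isUnit_eq_conjTranspose_mul_self {X : Matrix n n ℝ}
    (hX : X.PosDef) : ∃ C : Matrix n n ℝ, IsUnit C ∧ X = Cᴴ * C := by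
  have hpos : IsStrictlyPositive X := isStrictlyPositive_iff_posDef.mpr hX
  exact ⟨CFC.sqrt X, CFC.isUnit_sqrt_iff_isStrictlyPositive.mpr hpos, by
    rw [← star_eq_conjTranspose, (CFC.sqrt_nonneg X).isSelfAdjoint.star_eq,
      CFC.sqrt_mul_sqrt_self X hpos.nonneg]⟩

theorem Matrix.PosDef.det_mul_det_lt_sq_det_midpoint {X Y : Matrix n n ℝ} (hX : X.PosDef)
    (hY : Y.PosDef) (hXY : X ≠ Y) :
    X.det * Y.det < ((1 / 2 : ℝ) • X + (1 / 2 : ℝ) • Y).det ^ 2 := by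
  obtain ⟨C, hC, rfl⟩ := hX.exists_isUnit_eq_conjTranspose_mul_self
  have hCdet : IsUnit C.det := (isUnit_iff_isUnit_det C).mp hC
  set B := C⁻¹ᴴ * Y * C⁻¹
  have hCB : Y = Cᴴ * B * C := by
    have hCHdet : IsUnit Cᴴ.det := by rwa [det_conjTranspose, star_trivial]
    rw [show B = C⁻¹ᴴ * Y * C⁻¹ from rfl, conjTranspose_nonsing_inv, Matrix.mul_assoc,
      Matrix.mul_assoc, nonsing_inv_mul C hCdet, Matrix.mul_one, ← Matrix.mul_assoc,
      mul_nonsing_inv _ hCHdet, Matrix.one_mul]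
  have hB : B.PosDef :=
    (IsUnit.posDef_star_left_conjugate_iff (isUnit_nonsing_inv_iff.mpr hC)).mpr hY
  have hB1 : B ≠ 1 := fun h => hXY (by rw [hCB, h, Matrix.mul_one])
  have hmid :
      (1 / 2 : ℝ) • (Cᴴ * C) + (1 / 2 : ℝ) • Y = (1 / 2 : ℝ) • (Cᴴ * (1 + B) * C) := by
    rw [hCB, ← smul_add, Matrix.mul_add, Matrix.add_mul, Matrix.mul_one]
  have hhalf : ((1 / 2 : ℝ) ^ Fintype.card n) ^ 2 * 4 ^ Fintype.card n = 1 := by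
    rw [← pow_mul, mul_comm _ 2, pow_mul, ← mul_pow]
    norm_num
  rw [hmid, hCB]
  calc (Cᴴ * C).det * (Cᴴ * B * C).det
      = (Cᴴ * C).det ^ 2 * ((1 / 2 : ℝ) ^ Fintype.card n) ^ 2 *
          (4 ^ Fintype.card n * B.det) := by
        simp only [det_mul]
        linear_combination (-(Cᴴ.det * C.det) ^ 2 * B.det) * hhalf
    _ < (Cᴴ * C).det ^ 2 * ((1 / 2 : ℝ) ^ Fintype.card n) ^ 2 * (1 + B).det ^ 2 := by
        have hXdet := hX.det_pos
        gcongr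
        exact hB.pow_card_mul_det_lt_sq_det_one_add hB1
    _ = ((1 / 2 : ℝ) • (Cᴴ * (1 + B) * C)).det ^ 2 := by
        simp only [det_smul, det_mul]
        ring

theorem existsUnique_posDef_isMaxOn_det {K : Set (Matrix n n ℝ)} (hK : IsCompact K)
    (hKconv : Convex ℝ K) (hKpsd : ∀ X ∈ K, X.PosSemidef) {X₀ : Matrix n n ℝ} (hX₀ : X₀ ∈ K)
    (hX₀pd : X₀.PosDef) : ∃! X, X ∈ K ∧ X.PosDef ∧ ∀ Y ∈ K, Y.det ≤ X.det := by
  obtain ⟨X, hXK, hXmax⟩ :=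
    hK.exists_isMaxOn ⟨X₀, hX₀⟩ continuous_id.matrix_det.continuousOn
  have hXpd : X.PosDef := (hKpsd X hXK).posDef_iff_det_ne_zero.mpr
    (hX₀pd.det_pos.trans_le (hXmax hX₀)).ne'
  refine ⟨X, ⟨hXK, hXpd, fun Y hY => hXmax hY⟩, fun Y ⟨hYK, hYpd, hYmax⟩ => ?_⟩
  by_contra hYX
  have hmid :=
    hKconv hXK hYK (a := 1 / 2) (b := 1 / 2) (by norm_num) (by norm_num) (by norm_num)
  have hlt := hXpd.det_mul_det_lt_sq_det_midpoint hYpd (Ne.symm hYX)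
  have hdet : Y.det = X.det := le_antisymm (hXmax hYK) (hYmax X hXK)
  have hmid_le : ((1 / 2 : ℝ) • X + (1 / 2 : ℝ) • Y).det ≤ X.det := hXmax hmid
  rw [hdet, ← sq] at hlt
  exact hlt.not_ge (pow_le_pow_left₀ (hKpsd _ hmid).det_nonneg hmid_le 2)

end

end

theorem stmt6 {n m : ℕ} (S : Fin m → Matrix (Fin n) (Fin n) ℝ)
    (b : Fin m → ℝ)
    (F : Set (Matrix (Fin n) (Fin n) ℝ))
    (hF : F = {X | X.PosSemidef ∧ ∀ i, (S i * X).trace = b i})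
    (Fα : ℝ → Set (Matrix (Fin n) (Fin n) ℝ))
    (hFα : ∀ α, Fα α = {X | X.PosSemidef ∧ ∀ i, (S i * X).trace = b i + α * (S i).trace})
    (hne : F.Nonempty)
    (hbdd : ∃ M : ℝ, ∀ X ∈ F, ∀ i j, |X i j| ≤ M) :
    ∀ α : ℝ, 0 < α →
      ∃! X : Matrix (Fin n) (Fin n) ℝ,
        X ∈ Fα α ∧ X.PosDef ∧ ∀ Y ∈ Fα α, Y.det ≤ X.det := by
  intro α hα
  let A : Matrix (Fin n) (Fin n) ℝ →ₗ[ℝ] Fin m → ℝ :=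
    LinearMap.pi fun i => traceLinearMap (Fin n) ℝ ℝ ∘ₗ LinearMap.mulLeft ℝ (S i)
  have hF' : F = spectrahedron A b := by
    ext X
    simp [hF, spectrahedron, A, funext_iff]
  have hFα' : Fα α = spectrahedron A (b + α • A 1) := by
    ext X
    simp [hFα, spectrahedron, A, funext_iff]
  obtain ⟨X₀, hX₀⟩ := hne
  obtain ⟨M, hM⟩ := hbdd
  have htrace : ∀ X ∈ F, X.trace ≤ ∑ _i : Fin n, M := fun X hX =>
    Finset.sum_le_sum fun i _ => (le_abs_self _).trans (hM X hX i i)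
  rw [hF'] at hX₀ htrace
  have hker : ∀ Z, Z.PosSemidef → A Z = 0 → Z = 0 := fun _ =>
    eq_zero_of_posSemidef_of_map_eq_zero hX₀ htrace
  have hX₀α : X₀ + α • 1 ∈ spectrahedron A (b + α • A 1) :=
    ⟨hX₀.1.add (PosSemidef.one.smul hα.le), by rw [map_add, map_smul, hX₀.2]⟩
  rw [hFα']
  exact existsUnique_posDef_isMaxOn_det (isCompact_spectrahedron hker _)
    (convex_spectrahedron _) (fun X hX => hX.1) hX₀α
    (PosDef.posSemidef_add hX₀.1 (PosDef.one.smul hα))
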